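/- For every θ > 0 there exist s₀ ∈ (0,1) and a constant C > 0 such that for all s ∈ (0, s₀) and all x, y ∈ ℝ²: exp( -(9/(40 s)) Q_s(x,y) ) · k_{τ(s)θ}(x,y) ≤ C. -/

import Mathlib

noncomputable section

/-- `nsq x = |x|²`, the squared Euclidean norm on `ℝ²`. -/
def nsq (x : Fin 2 → ℝ) : ℝ := ∑ i, x i ^ 2

/-- The wedge product `x∧y = x₁y₂ - x₂y₁` on `ℝ²`. -/
def wedge (x y : Fin 2 → ℝ) : ℝ := x 0 * y 1 - x 1 * y 0

/-- The Euclidean inner product `⟨x,y⟩` on `ℝ²`. -/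
def dot2 (x y : Fin 2 → ℝ) : ℝ := x 0 * y 0 + x 1 * y 1

/-- `k_{tθ}(x,y) = exp(-(e^{-t}/(1-e^{-2t}))[(1-cos(tθ))⟨x,y⟩ + sin(tθ) x∧y])`. -/
def kker (t θ : ℝ) (x y : Fin 2 → ℝ) : ℝ :=
  Real.exp (-(Real.exp (-t) / (1 - Real.exp (-2 * t))) *
    ((1 - Real.cos (t * θ)) * dot2 x y + Real.sin (t * θ) * wedge x y))

/-- `τ(s) = log((1+s)/(1-s))` for `s ∈ (0,1)`. -/
def tau (s : ℝ) : ℝ := Real.log ((1 + s) / (1 - s))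

/-- `Q_s(x,y) = |(1+s)x - (1-s)y|²`. -/
def Qform (s : ℝ) (x y : Fin 2 → ℝ) : ℝ := nsq ((1 + s) • x - (1 - s) • y)

end

/-! With `u = (1+s)x`, `v = (1-s)y` and `β = τ(s)θ` we have `Q_s(x,y) = |u-v|²`, and since
`e^{-τ(s)} = (1-s)/(1+s)` the exponent of the product is
`-(1/(4s)) (κ|u-v|² + (1-cos β)⟨u,v⟩ + sin β · u∧v)` with `κ = 9/10`. Identifying `ℝ²` with `ℂ`,
this form is `κ|u|² + κ|v|² + Re(c ū v)` with `c = (1-2κ) - e^{iβ}`; as `|c| ≤ 2κ` once `κ ≥ 1/2`,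
it is nonnegative, so the product is at most `1` for every `s ∈ (0,1)` and every `θ`. -/

open Real

lemma nsq_nonneg (x : Fin 2 → ℝ) : 0 ≤ nsq x := by
  unfold nsq; positivity

lemma nsq_sub (x y : Fin 2 → ℝ) : nsq (x - y) = nsq x + nsq y - 2 * dot2 x y := by
  simp only [nsq, dot2, Fin.sum_univ_two, Pi.sub_apply]; ring

lemma dot2_sq_add_wedge_sq (x y : Fin 2 → ℝ) :
    dot2 x y ^ 2 + wedge x y ^ 2 = nsq x * nsq y := by
  simp only [nsq, dot2, wedge, Fin.sum_univ_two]; ring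

lemma dot2_smul_smul (a b : ℝ) (x y : Fin 2 → ℝ) : dot2 (a • x) (b • y) = a * b * dot2 x y := by
  simp only [dot2, Pi.smul_apply, smul_eq_mul]; ring

lemma wedge_smul_smul (a b : ℝ) (x y : Fin 2 → ℝ) :
    wedge (a • x) (b • y) = a * b * wedge x y := by
  simp only [wedge, Pi.smul_apply, smul_eq_mul]; ring

lemma neg_le_dot2_wedge {κ p q : ℝ} (hκ : 0 ≤ κ) (hpq : p ^ 2 + q ^ 2 ≤ (2 * κ) ^ 2)
    (x y : Fin 2 → ℝ) : -(κ * (nsq x + nsq y)) ≤ p * dot2 x y + q * wedge x y := by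
  have cauchy_schwarz :
      (p * dot2 x y + q * wedge x y) ^ 2 ≤ (p ^ 2 + q ^ 2) * (nsq x * nsq y) := by
    rw [← dot2_sq_add_wedge_sq]
    nlinarith [sq_nonneg (p * wedge x y - q * dot2 x y)]
  have am_gm : (2 * κ) ^ 2 * (nsq x * nsq y) ≤ (κ * (nsq x + nsq y)) ^ 2 := by
    nlinarith [sq_nonneg (κ * (nsq x - nsq y))]
  have hprod : (p ^ 2 + q ^ 2) * (nsq x * nsq y) ≤ (2 * κ) ^ 2 * (nsq x * nsq y) :=
    mul_le_mul_of_nonneg_right hpq (mul_nonneg (nsq_nonneg x) (nsq_nonneg y))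
  have hbound : 0 ≤ κ * (nsq x + nsq y) :=
    mul_nonneg hκ (add_nonneg (nsq_nonneg x) (nsq_nonneg y))
  exact (abs_le_of_sq_le_sq' (cauchy_schwarz.trans (hprod.trans am_gm)) hbound).1

lemma rotation_form_nonneg {κ : ℝ} (hκ : 1 / 2 ≤ κ) (β : ℝ) (x y : Fin 2 → ℝ) :
    0 ≤ κ * nsq (x - y) + (1 - cos β) * dot2 x y + sin β * wedge x y := by
  have hpq : (1 - 2 * κ - cos β) ^ 2 + sin β ^ 2 ≤ (2 * κ) ^ 2 := by
    nlinarith [sin_sq_add_cos_sq β, cos_le_one β]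
  have h := neg_le_dot2_wedge (by linarith) hpq x y
  rw [nsq_sub]
  linarith

lemma exp_neg_tau {s : ℝ} (hs₀ : -1 < s) (hs₁ : s < 1) : exp (-tau s) = (1 - s) / (1 + s) := by
  rw [tau, ← log_inv, inv_div, exp_log (div_pos (by linarith) (by linarith))]

lemma exp_neg_tau_div_one_sub_exp {s : ℝ} (hs₀ : 0 < s) (hs₁ : s < 1) :
    exp (-tau s) / (1 - exp (-2 * tau s)) = (1 - s ^ 2) / (4 * s) := by
  have h2 : exp (-2 * tau s) = exp (-tau s) ^ 2 := by rw [← exp_nat_mul]; ring_nf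
  rw [h2, exp_neg_tau (by linarith) hs₁]
  have : 1 + s ≠ 0 := by linarith
  have hden : 1 - ((1 - s) / (1 + s)) ^ 2 = 4 * s / (1 + s) ^ 2 := by field_simp; ring
  rw [hden]
  field_simp
  ring

theorem exp_neg_Qform_mul_kker_tau_le_one {κ : ℝ} (hκ : 1 / 2 ≤ κ) {s : ℝ} (hs₀ : 0 < s)
    (hs₁ : s < 1) (θ : ℝ) (x y : Fin 2 → ℝ) :
    exp (-(κ / (4 * s)) * Qform s x y) * kker (tau s) θ x y ≤ 1 := by
  set β := tau s * θ
  have hdot := dot2_smul_smul (1 + s) (1 - s) x y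
  have hwedge := wedge_smul_smul (1 + s) (1 - s) x y
  have hform := rotation_form_nonneg hκ β ((1 + s) • x) ((1 - s) • y)
  have hexponent : -(κ / (4 * s)) * Qform s x y + -((1 - s ^ 2) / (4 * s)) *
        ((1 - cos β) * dot2 x y + sin β * wedge x y) =
      -((κ * Qform s x y + (1 - cos β) * dot2 ((1 + s) • x) ((1 - s) • y) +
        sin β * wedge ((1 + s) • x) ((1 - s) • y)) / (4 * s)) := by
    rw [hdot, hwedge]; field_simp; ring
  rw [kker, exp_neg_tau_div_one_sub_exp hs₀ hs₁, ← exp_add, exp_le_one_iff, hexponent,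
    neg_nonpos]
  exact div_nonneg hform (by positivity)

theorem two_dim_factor_bounded_small_time_general (θ : ℝ) :
    ∃ s₀ : ℝ, 0 < s₀ ∧ s₀ < 1 ∧ ∃ C : ℝ, 0 < C ∧
      ∀ s : ℝ, 0 < s → s < s₀ → ∀ x y : Fin 2 → ℝ,
        Real.exp (-(9 / (40 * s)) * Qform s x y) * kker (tau s) θ x y ≤ C := by
  refine ⟨1 / 2, by norm_num, by norm_num, 1, one_pos, fun s hs₀ hs₁ x y => ?_⟩
  have h :=
    exp_neg_Qform_mul_kker_tau_le_one (κ := 9 / 10) (by norm_num) hs₀ (by linarith) θ x y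
  rwa [show (9 / 10 : ℝ) / (4 * s) = 9 / (40 * s) by ring] at h

/-- For every `θ > 0` there exist `s₀ ∈ (0,1)` and `C > 0` such that for
all `s ∈ (0, s₀)` and all `x, y ∈ ℝ²`:
`exp(-(9/(40 s)) Q_s(x,y)) · k_{τ(s)θ}(x,y) ≤ C`. -/
theorem two_dim_factor_bounded_small_time (θ : ℝ) (hθ : 0 < θ) :
    ∃ s₀ : ℝ, 0 < s₀ ∧ s₀ < 1 ∧ ∃ C : ℝ, 0 < C ∧
      ∀ s : ℝ, 0 < s → s < s₀ → ∀ x y : Fin 2 → ℝ,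
        Real.exp (-(9 / (40 * s)) * Qform s x y) * kker (tau s) θ x y ≤ C :=
  two_dim_factor_bounded_small_time_general θ
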